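/- Let S be a linear integrable cost process, S_t(x,ω) = s_t(ω)·x with s=(s_t)_{t=0}^T an ℝ^J-valued adapted integrable process, and let there be no portfolio constraints (D_t(ω) = ℝ^J). Let C be the set of claim processes superhedgeable with zero cost. Then the polar cone of C¹ satisfies {y ∈ M^∞ | E ∑_{t=0}^T c_t y_t ≤ 0 ∀ c ∈ C¹} = {y ∈ M^∞ : y_t ≥ 0 a.s. for all t and the process (y_t s_t)_{t=0}^T is a martingale with respect to (F_t)}. -/

import Mathlib

/-!
Write `m = y s`. Testing the polar inequality against the claim of buying a portfolio `v` on
`A ∈ ℱₜ` at time `t` and selling it at `t + 1` gives `v ⬝ᵥ ∫_A (mₜ₊₁ - mₜ) ≤ 0` for every `v`,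
i.e. the one-step martingale property, and testing against the nonpositive claim `-1_A` gives
`y ≥ 0`. Conversely, if `c` is superhedged by `x`, then `cₜ ≤ -sₜ·(xₜ - xₜ₋₁)`, and summation by
parts with `y ≥ 0` bounds `∑ₜ cₜ yₜ` by the martingale transform `∑ₜ xₜ·(mₜ₊₁ - mₜ)`. Since `x`
need not be bounded, `E ∑ₜ cₜ yₜ ≤ 0` then follows by backward induction over the trading dates:
truncate the position at each date to `{‖xₜ‖ ≤ n}`, where its gain has mean zero, and let
`n → ∞`.
-/

open MeasureTheory Filter

noncomputable section

/-- The recession cone of a set in a real vector space. -/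
def rcone {V : Type*} [AddCommMonoid V] [SMul ℝ V] (A : Set V) : Set V :=
  {y | ∀ a ∈ A, ∀ α : ℝ, 0 < α → a + α • y ∈ A}

variable {Ω : Type*} {m0 : MeasurableSpace Ω} {T : ℕ}

/-- The set `M` of adapted claim processes. -/
def ClaimM (ℱ : Filtration (Fin (T + 1)) m0) : Set (Fin (T + 1) → Ω → ℝ) :=
  {c | StronglyAdapted ℱ c}

/-- The set `M₋` of almost surely nonpositive claim processes. -/
def Mminus (P : Measure Ω) (ℱ : Filtration (Fin (T + 1)) m0) :
    Set (Fin (T + 1) → Ω → ℝ) :=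
  {c | c ∈ ClaimM ℱ ∧ ∀ t, ∀ᵐ ω ∂P, c t ω ≤ 0}

/-- The superhedging cost `π(c) = inf {α ∈ ℝ | c - α • p ∈ C} ∈ [-∞,+∞]`. -/
def shc {Ω : Type*} {T : ℕ} (C : Set (Fin (T + 1) → Ω → ℝ))
    (p c : Fin (T + 1) → Ω → ℝ) : EReal :=
  sInf ((fun α : ℝ => (α : EReal)) '' {α : ℝ | c - α • p ∈ C})

/-- The portfolio held before time `t`, with the convention `x₋₁ = 0`. -/
def prevP {Ω : Type*} {T : ℕ} {E : Type*} [Zero E]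
    (x : Fin (T + 1) → Ω → E) (t : Fin (T + 1)) : Ω → E :=
  if t.1 = 0 then 0 else x ⟨t.1 - 1, lt_of_le_of_lt (Nat.sub_le _ _) t.isLt⟩

variable {J : Type*} [Fintype J]

/-- The set of claim processes superhedgeable with zero cost in the linear unconstrained
market with price process `s`. -/
def CsetLin (P : Measure Ω) (ℱ : Filtration (Fin (T + 1)) m0)
    (s : Fin (T + 1) → Ω → (J → ℝ)) : Set (Fin (T + 1) → Ω → ℝ) :=
  {c | c ∈ ClaimM ℱ ∧ ∃ x : Fin (T + 1) → Ω → (J → ℝ), StronglyAdapted ℱ x ∧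
    x (Fin.last T) = 0 ∧
    ∀ᵐ ω ∂P, ∀ t, (∑ j, s t ω j * (x t ω j - prevP x t ω j)) + c t ω ≤ 0}

/-- The set `M¹` of integrable claim processes. -/
def M1 (P : Measure Ω) (ℱ : Filtration (Fin (T + 1)) m0) :
    Set (Fin (T + 1) → Ω → ℝ) :=
  {c | c ∈ ClaimM ℱ ∧ ∀ t, Integrable (c t) P}

/-- The set `M^∞` of essentially bounded claim processes. -/
def Minf (P : Measure Ω) (ℱ : Filtration (Fin (T + 1)) m0) :
    Set (Fin (T + 1) → Ω → ℝ) :=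
  {c | c ∈ ClaimM ℱ ∧ ∀ t, MemLp (c t) ⊤ P}

/-- The bilinear pairing `E ∑ₜ cₜ yₜ`. -/
def pairing (P : Measure Ω) (c y : Fin (T + 1) → Ω → ℝ) : ℝ :=
  ∫ ω, ∑ t, c t ω * y t ω ∂P

open Matrix

section Integral

variable {μ : Measure Ω}

lemma MeasureTheory.Integrable.dotProduct_of_norm_le {f g : Ω → J → ℝ} (hf : Integrable f μ)
    (hg : AEStronglyMeasurable g μ) {C : ℝ} (hgC : ∀ ω, ‖g ω‖ ≤ C) :
    Integrable (fun ω => g ω ⬝ᵥ f ω) μ :=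
  integrable_finsetSum _ fun j _ => (hf.eval j).bdd_mul
    ((continuous_apply j).comp_aestronglyMeasurable hg)
    (ae_of_all _ fun ω => (norm_le_pi_norm (g ω) j).trans (hgC ω))

lemma integral_const_dotProduct (v : J → ℝ) {f : Ω → J → ℝ}
    (hf : Integrable f μ) : ∫ ω, v ⬝ᵥ f ω ∂μ = v ⬝ᵥ ∫ ω, f ω ∂μ := by
  simp only [dotProduct]
  rw [integral_finsetSum _ fun j _ => (hf.eval j).const_mul (v j)]
  simp [integral_const_mul, eval_integral hf.eval]

lemma ae_nonneg_of_forall_setIntegral_nonneg_of_stronglyMeasurable {m : MeasurableSpace Ω}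
    (hm : m ≤ m0) {f : Ω → ℝ} (hf : Integrable f μ) (hfm : StronglyMeasurable[m] f)
    (hf_nonneg : ∀ A, MeasurableSet[m] A → 0 ≤ ∫ ω in A, f ω ∂μ) :
    0 ≤ᵐ[μ] f :=
  ae_of_ae_trim hm <| ae_nonneg_of_forall_setIntegral_nonneg (hf.trim hm hfm) fun A hA _ => by
    rw [← setIntegral_trim hm hfm hA]
    exact hf_nonneg A hA

lemma integral_nonpos_of_setIntegral_norm_le_nonpos {E : Type*} [NormedAddCommGroup E]
    {ξ : Ω → E} (hξ : StronglyMeasurable ξ) {g : Ω → ℝ} (hg : Integrable g μ)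
    (h : ∀ n : ℕ, ∫ ω in {ω | ‖ξ ω‖ ≤ n}, g ω ∂μ ≤ 0) : ∫ ω, g ω ∂μ ≤ 0 := by
  have hunion : ⋃ n : ℕ, {ω | ‖ξ ω‖ ≤ n} = Set.univ :=
    Set.eq_univ_of_forall fun ω => Set.mem_iUnion.2 (exists_nat_ge ‖ξ ω‖)
  have htendsto := tendsto_setIntegral_of_monotone (μ := μ) (f := g)
    (fun n : ℕ => hξ.norm.measurableSet_le stronglyMeasurable_const)
    (fun a b hab ω (hω : ‖ξ ω‖ ≤ a) => hω.trans (Nat.cast_le.2 hab)) hg.integrableOn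
  rw [hunion, setIntegral_univ] at htendsto
  exact le_of_tendsto' htendsto h

end Integral

section Martingale

variable {P : Measure Ω}

lemma MeasureTheory.Martingale.eval {ι : Type*} [Preorder ι] {ℱ : Filtration ι m0}
    {m : ι → Ω → J → ℝ} (hm : Martingale m ℱ P) (j : J) :
    Martingale (fun t ω => m t ω j) ℱ P := by
  refine ⟨fun t => (continuous_apply j).comp_stronglyMeasurable (hm.stronglyAdapted t),
    fun i k hik => ?_⟩
  filter_upwards [(ContinuousLinearMap.proj (R := ℝ) (φ := fun _ : J => ℝ) j).comp_condExp_comm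
    (m := ℱ i) (hm.integrable k), hm.condExp_ae_eq hik] with ω h1 h2
  exact h1.symm.trans (congrFun h2 j)

variable [IsFiniteMeasure P]

lemma MeasureTheory.Martingale.integral_mul_eq {ι : Type*} [Preorder ι] {ℱ : Filtration ι m0}
    {f : ι → Ω → ℝ} (hf : Martingale f ℱ P) {i k : ι} (hik : i ≤ k) {ξ : Ω → ℝ}
    (hξ : StronglyMeasurable[ℱ i] ξ) {C : ℝ} (hξC : ∀ ω, ‖ξ ω‖ ≤ C) :
    ∫ ω, ξ ω * f k ω ∂P = ∫ ω, ξ ω * f i ω ∂P := by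
  have hint : Integrable (ξ * f k) P :=
    (hf.integrable k).bdd_mul (hξ.mono (ℱ.le i)).aestronglyMeasurable (ae_of_all _ hξC)
  calc ∫ ω, ξ ω * f k ω ∂P = ∫ ω, P[ξ * f k|ℱ i] ω ∂P := (integral_condExp (ℱ.le i)).symm
    _ = ∫ ω, ξ ω * f i ω ∂P := integral_congr_ae <| by
      filter_upwards [condExp_mul_of_stronglyMeasurable_left hξ hint (hf.integrable k),
        hf.condExp_ae_eq hik] with ω h1 h2
      simp [h1, h2]

lemma MeasureTheory.Martingale.integral_dotProduct_sub_eq_zero {ι : Type*} [Preorder ι]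
    {ℱ : Filtration ι m0} {m : ι → Ω → J → ℝ} (hm : Martingale m ℱ P) {i k : ι} (hik : i ≤ k)
    {ξ : Ω → J → ℝ} (hξ : StronglyMeasurable[ℱ i] ξ) {C : ℝ} (hξC : ∀ ω, ‖ξ ω‖ ≤ C) :
    ∫ ω, ξ ω ⬝ᵥ (m k ω - m i ω) ∂P = 0 := by
  have hξj : ∀ j, StronglyMeasurable[ℱ i] (fun ω => ξ ω j) := fun j =>
    (continuous_apply j).comp_stronglyMeasurable hξ
  have hξjC : ∀ j ω, ‖ξ ω j‖ ≤ C := fun j ω => (norm_le_pi_norm (ξ ω) j).trans (hξC ω)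
  have hint : ∀ t j, Integrable (fun ω => ξ ω j * m t ω j) P := fun t j =>
    ((hm.integrable t).eval j).bdd_mul ((hξj j).mono (ℱ.le i)).aestronglyMeasurable
      (ae_of_all _ (hξjC j))
  simp only [dotProduct, Pi.sub_apply, mul_sub, Finset.sum_sub_distrib]
  rw [integral_sub (integrable_finsetSum _ fun j _ => hint k j)
    (integrable_finsetSum _ fun j _ => hint i j), integral_finsetSum _ fun j _ => hint k j,
    integral_finsetSum _ fun j _ => hint i j, sub_eq_zero]
  exact Finset.sum_congr rfl fun j _ => (hm.eval j).integral_mul_eq hik (hξj j) (hξjC j)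

lemma martingale_fin_of_setIntegral_eq_succ {E : Type*} [NormedAddCommGroup E]
    [NormedSpace ℝ E] [CompleteSpace E] {ℱ : Filtration (Fin (T + 1)) m0}
    {f : Fin (T + 1) → Ω → E} (hadp : StronglyAdapted ℱ f) (hint : ∀ t, Integrable (f t) P)
    (hf : ∀ t : Fin T, ∀ A, MeasurableSet[ℱ t.castSucc] A →
      ∫ ω in A, f t.succ ω ∂P = ∫ ω in A, f t.castSucc ω ∂P) :
    Martingale f ℱ P := by
  have key : ∀ i k, i ≤ k → ∀ A, MeasurableSet[ℱ i] A →
      ∫ ω in A, f k ω ∂P = ∫ ω in A, f i ω ∂P := by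
    intro i k
    induction k using Fin.induction with
    | zero => intro hik A _; rw [Fin.le_zero_iff.mp hik]
    | succ t ih =>
      intro hik A hA
      rcases hik.lt_or_eq with hlt | rfl
      · have hit : i ≤ t.castSucc := Fin.le_castSucc_iff.mpr hlt
        rw [hf t A (ℱ.mono hit A hA), ih hit A hA]
      · rfl
  exact ⟨hadp, fun i k hik => (ae_eq_condExp_of_forall_setIntegral_eq (ℱ.le i) (hint k)
    (fun _ _ _ => (hint i).integrableOn) (fun A hA _ => (key i k hik A hA).symm)
    (hadp i).aestronglyMeasurable).symm⟩

lemma MeasureTheory.Martingale.integral_nonpos_of_le_dotProduct_sub_add {ι : Type*} [Preorder ι]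
    {ℱ : Filtration ι m0} {m : ι → Ω → J → ℝ} (hm : Martingale m ℱ P) {i k : ι} (hik : i ≤ k)
    {ξ : Ω → J → ℝ} (hξ : StronglyMeasurable[ℱ i] ξ) {g R : Ω → ℝ} (hg : Integrable g P)
    (hle : ∀ᵐ ω ∂P, g ω ≤ ξ ω ⬝ᵥ (m k ω - m i ω) + R ω)
    (hR : ∀ A, MeasurableSet[ℱ i] A → ∀ g' : Ω → ℝ, Integrable g' P →
      (∀ᵐ ω ∂P, g' ω ≤ A.indicator R ω) → ∫ ω, g' ω ∂P ≤ 0) :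
    ∫ ω, g ω ∂P ≤ 0 := by
  -- On `{‖ξ‖ ≤ n}` the position `ξ` is bounded, so its gain has mean zero; then let `n → ∞`.
  refine integral_nonpos_of_setIntegral_norm_le_nonpos (hξ.mono (ℱ.le i)) hg fun n => ?_
  set A := {ω | ‖ξ ω‖ ≤ n}
  have hA : MeasurableSet[ℱ i] A := hξ.norm.measurableSet_le stronglyMeasurable_const
  have hξA : ∀ ω, ‖A.indicator ξ ω‖ ≤ n := fun ω => by
    by_cases hω : ω ∈ A
    · rw [Set.indicator_of_mem hω]
      exact hω
    · simp [hω]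
  have hgain : Integrable (fun ω => A.indicator ξ ω ⬝ᵥ (m k ω - m i ω)) P :=
    ((hm.integrable k).sub (hm.integrable i)).dotProduct_of_norm_le
      ((hξ.indicator hA).mono (ℱ.le i)).aestronglyMeasurable hξA
  have hcut := hR A hA (fun ω => A.indicator g ω - A.indicator ξ ω ⬝ᵥ (m k ω - m i ω))
    ((hg.indicator (ℱ.le i A hA)).sub hgain) <| by
      filter_upwards [hle] with ω hω
      by_cases hωA : ω ∈ A
      · simp only [Set.indicator_of_mem hωA]
        linarith
      · simp [Set.indicator_of_notMem hωA]
  rwa [integral_sub (hg.indicator (ℱ.le i A hA)) hgain,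
    hm.integral_dotProduct_sub_eq_zero hik (hξ.indicator hA) hξA, sub_zero,
    integral_indicator (ℱ.le i A hA)] at hcut

lemma MeasureTheory.Martingale.integral_nonpos_of_ae_le_sum_filter_dotProduct_sub
    {ℱ : Filtration (Fin (T + 1)) m0} {m : Fin (T + 1) → Ω → J → ℝ} (hm : Martingale m ℱ P)
    {k : ℕ} (hk : k ≤ T) {H : Fin T → Ω → J → ℝ}
    (hH : ∀ t : Fin T, k ≤ t.val → StronglyMeasurable[ℱ t.castSucc] (H t)) {g : Ω → ℝ}
    (hg : Integrable g P)
    (hle : ∀ᵐ ω ∂P, g ω ≤ ∑ t with k ≤ t.val, H t ω ⬝ᵥ (m t.succ ω - m t.castSucc ω)) :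
    ∫ ω, g ω ∂P ≤ 0 := by
  induction hk using Nat.decreasingInduction generalizing H g with
  | self =>
    rw [Finset.filter_false_of_mem fun (t : Fin T) _ => not_le.2 t.isLt] at hle
    exact integral_nonpos_of_ae (hle.mono fun ω hω => by simpa using hω)
  | of_succ k hk ih =>
    let t₀ : Fin T := ⟨k, hk⟩
    have hdates : Finset.univ.filter (fun t : Fin T => k ≤ t.val) =
        insert t₀ (Finset.univ.filter fun t : Fin T => k + 1 ≤ t.val) := by
      ext t
      simp only [Finset.mem_filter, Finset.mem_univ, true_and, Finset.mem_insert, Fin.ext_iff, t₀]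
      omega
    have ht₀ : t₀ ∉ Finset.univ.filter fun t : Fin T => k + 1 ≤ t.val := by simp [t₀]
    simp only [hdates, Finset.sum_insert ht₀] at hle
    have hlater : ∀ t : Fin T, k + 1 ≤ t.val → t₀.castSucc ≤ t.castSucc := fun t ht => by
      simp only [Fin.le_def, Fin.val_castSucc, t₀]
      omega
    refine hm.integral_nonpos_of_le_dotProduct_sub_add t₀.castSucc_le_succ (hH t₀ le_rfl) hg hle
      fun A hA g' hg' hle' => ih (H := fun t => A.indicator (H t))
        (fun t ht => (hH t (by omega)).indicator (ℱ.mono (hlater t ht) A hA))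
        hg' (hle'.mono fun ω hω => ?_)
    by_cases hωA : ω ∈ A <;> simpa [hωA] using hω

lemma MeasureTheory.Martingale.integral_nonpos_of_ae_le_sum_dotProduct_sub
    {ℱ : Filtration (Fin (T + 1)) m0} {m : Fin (T + 1) → Ω → J → ℝ} (hm : Martingale m ℱ P)
    {H : Fin T → Ω → J → ℝ} (hH : ∀ t, StronglyMeasurable[ℱ t.castSucc] (H t)) {g : Ω → ℝ}
    (hg : Integrable g P)
    (hle : ∀ᵐ ω ∂P, g ω ≤ ∑ t, H t ω ⬝ᵥ (m t.succ ω - m t.castSucc ω)) :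
    ∫ ω, g ω ∂P ≤ 0 :=
  hm.integral_nonpos_of_ae_le_sum_filter_dotProduct_sub T.zero_le (fun t _ => hH t) hg
    (by simpa using hle)

end Martingale

section Portfolio

variable {E : Type*} [Zero E]

@[simp]
lemma prevP_zero (x : Fin (T + 1) → Ω → E) : prevP x 0 = 0 := rfl

@[simp]
lemma prevP_succ (x : Fin (T + 1) → Ω → E) (t : Fin T) : prevP x t.succ = x t.castSucc :=
  if_neg (Nat.succ_ne_zero _)

@[simp]
lemma prevP_zero_left (t : Fin (T + 1)) : prevP (0 : Fin (T + 1) → Ω → E) t = 0 := by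
  unfold prevP; split_ifs <;> rfl

lemma stronglyMeasurable_prevP [TopologicalSpace E] {ℱ : Filtration (Fin (T + 1)) m0}
    {x : Fin (T + 1) → Ω → E} (hx : StronglyAdapted ℱ x) (t : Fin (T + 1)) :
    StronglyMeasurable[ℱ t] (prevP x t) := by
  cases t using Fin.cases with
  | zero => exact stronglyMeasurable_const
  | succ t => exact (prevP_succ x t).symm ▸ (hx t.castSucc).mono (ℱ.mono t.castSucc_le_succ)

lemma norm_prevP_le {F : Type*} [NormedAddCommGroup F] {x : Fin (T + 1) → Ω → F} {C : ℝ}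
    (hC : 0 ≤ C) (hx : ∀ t ω, ‖x t ω‖ ≤ C) (t : Fin (T + 1)) (ω : Ω) : ‖prevP x t ω‖ ≤ C := by
  cases t using Fin.cases with
  | zero => simpa using hC
  | succ t => simpa using hx t.castSucc ω

end Portfolio

lemma sum_dotProduct_sub_prevP (a : Fin (T + 1) → J → ℝ) (x : Fin (T + 1) → Ω → J → ℝ)
    (hx : x (Fin.last T) = 0) (ω : Ω) :
    ∑ t, a t ⬝ᵥ (x t ω - prevP x t ω) =
      -∑ t : Fin T, x t.castSucc ω ⬝ᵥ (a t.succ - a t.castSucc) := by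
  simp only [dotProduct_sub, Finset.sum_sub_distrib]
  rw [Fin.sum_univ_castSucc (f := fun t => a t ⬝ᵥ x t ω),
    Fin.sum_univ_succ (f := fun t => a t ⬝ᵥ prevP x t ω)]
  simp [hx, dotProduct_comm (x _ ω)]

/-- The largest claim that the strategy `x` superhedges at zero cost. -/
def hedgedClaim (s x : Fin (T + 1) → Ω → J → ℝ) : Fin (T + 1) → Ω → ℝ :=
  fun t ω => -(s t ω ⬝ᵥ (x t ω - prevP x t ω))

section HedgedClaim

variable {P : Measure Ω} {ℱ : Filtration (Fin (T + 1)) m0} {s x : Fin (T + 1) → Ω → J → ℝ}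

lemma mem_CsetLin_iff {c : Fin (T + 1) → Ω → ℝ} :
    c ∈ CsetLin P ℱ s ↔ StronglyAdapted ℱ c ∧ ∃ x, StronglyAdapted ℱ x ∧
      x (Fin.last T) = 0 ∧ ∀ᵐ ω ∂P, ∀ t, c t ω ≤ hedgedClaim s x t ω := by
  simp only [CsetLin, ClaimM, hedgedClaim, dotProduct, Pi.sub_apply, le_neg_iff_add_nonpos_left]
  rfl

lemma stronglyAdapted_hedgedClaim (hs : StronglyAdapted ℱ s) (hx : StronglyAdapted ℱ x) :
    StronglyAdapted ℱ (hedgedClaim s x) := fun t =>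
  ((continuous_fst.dotProduct continuous_snd).comp_stronglyMeasurable
    ((hs t).prodMk ((hx t).sub (stronglyMeasurable_prevP hx t)))).neg

lemma integrable_hedgedClaim (hs : ∀ t, Integrable (s t) P) (hx : StronglyAdapted ℱ x) {C : ℝ}
    (hC : 0 ≤ C) (hxC : ∀ t ω, ‖x t ω‖ ≤ C) (t : Fin (T + 1)) :
    Integrable (hedgedClaim s x t) P := by
  have hΔx : ∀ ω, ‖x t ω - prevP x t ω‖ ≤ C + C := fun ω =>
    (norm_sub_le _ _).trans (add_le_add (hxC t ω) (norm_prevP_le hC hxC t ω))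
  exact ((hs t).dotProduct_of_norm_le (((hx t).sub (stronglyMeasurable_prevP hx t)).mono
    (ℱ.le t)).aestronglyMeasurable hΔx).neg.congr
    (ae_of_all _ fun ω => by simp [hedgedClaim, dotProduct_comm])

lemma sum_hedgedClaim_mul (hx : x (Fin.last T) = 0) (y : Fin (T + 1) → Ω → ℝ) (ω : Ω) :
    ∑ t, hedgedClaim s x t ω * y t ω = ∑ t : Fin T,
      x t.castSucc ω ⬝ᵥ (y t.succ ω • s t.succ ω - y t.castSucc ω • s t.castSucc ω) := by
  rw [← neg_neg (∑ t : Fin T, _), ← sum_dotProduct_sub_prevP (fun t => y t ω • s t ω) x hx ω,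
    ← Finset.sum_neg_distrib]
  simp [hedgedClaim, smul_dotProduct, mul_comm, mul_sub]

end HedgedClaim

section Polar

variable {P : Measure Ω} {ℱ : Filtration (Fin (T + 1)) m0}
  {s : Fin (T + 1) → Ω → J → ℝ} {y : Fin (T + 1) → Ω → ℝ}

lemma ae_nonneg_of_mem_polar [IsFiniteMeasure P] (hy : y ∈ Minf P ℱ)
    (hpolar : ∀ c ∈ CsetLin P ℱ s ∩ M1 P ℱ, pairing P c y ≤ 0) (t : Fin (T + 1)) :
    ∀ᵐ ω ∂P, 0 ≤ y t ω := by
  refine ae_nonneg_of_forall_setIntegral_nonneg_of_stronglyMeasurable (ℱ.le t)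
    ((hy.2 t).integrable le_top) (hy.1 t) fun A hA => ?_
  let c : Fin (T + 1) → Ω → ℝ := Pi.single t (-A.indicator fun _ => 1)
  have hc_adapted : StronglyAdapted ℱ c := fun u => by
    by_cases hu : u = t
    · subst hu
      simpa [c] using (stronglyMeasurable_const.indicator hA).neg
    · simpa [c, hu] using stronglyMeasurable_zero
  have hc : c ∈ CsetLin P ℱ s ∩ M1 P ℱ := by
    refine ⟨mem_CsetLin_iff.2 ⟨hc_adapted, 0, fun _ => stronglyMeasurable_const, rfl,
      ae_of_all _ fun ω u => ?_⟩, hc_adapted, fun u => ?_⟩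
    · by_cases hu : u = t
      · subst hu
        simpa [c, hedgedClaim] using Set.indicator_nonneg (fun _ _ => zero_le_one) ω
      · simp [c, hu, hedgedClaim]
    · by_cases hu : u = t
      · subst hu
        simpa [c] using ((integrable_const 1).indicator (ℱ.le u A hA)).neg
      · simp [c, hu]
  have hpair : pairing P c y = -∫ ω in A, y t ω ∂P :=
    calc pairing P c y = ∫ ω, -A.indicator (y t) ω ∂P := by
          refine integral_congr_ae (ae_of_all _ fun ω => ?_)
          dsimp only
          rw [Finset.sum_eq_single t (fun u _ hu => by simp [c, hu]) (by simp)]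
          by_cases hω : ω ∈ A <;> simp [c, hω]
      _ = -∫ ω in A, y t ω ∂P := by rw [integral_neg, integral_indicator (ℱ.le t A hA)]
  linarith [hpolar c hc]

/-- The test claim buys the portfolio `v = ∫_A (mₜ₊₁ - mₜ)` on `A` at `t` and sells it at `t + 1`;
its pairing with `y` is `v ⬝ᵥ v`. -/
lemma setIntegral_succ_eq_of_mem_polar (hs : StronglyAdapted ℱ s)
    (hsint : ∀ t, Integrable (s t) P) (hy : y ∈ Minf P ℱ)
    (hpolar : ∀ c ∈ CsetLin P ℱ s ∩ M1 P ℱ, pairing P c y ≤ 0) (t : Fin T) {A : Set Ω}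
    (hA : MeasurableSet[ℱ t.castSucc] A) :
    ∫ ω in A, y t.succ ω • s t.succ ω ∂P = ∫ ω in A, y t.castSucc ω • s t.castSucc ω ∂P := by
  have hm : ∀ u, Integrable (fun ω => y u ω • s u ω) P := fun u =>
    (hsint u).smul_of_top_right (hy.2 u)
  have hA' : MeasurableSet A := ℱ.le _ A hA
  set v := ∫ ω in A, (y t.succ ω • s t.succ ω - y t.castSucc ω • s t.castSucc ω) ∂P with hv_def
  let x : Fin (T + 1) → Ω → J → ℝ := Pi.single t.castSucc (A.indicator fun _ => v)
  have hx : StronglyAdapted ℱ x := fun u => by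
    by_cases hu : u = t.castSucc
    · subst hu
      simpa [x] using stronglyMeasurable_const.indicator hA
    · simpa [x, hu] using stronglyMeasurable_zero
  have hxT : x (Fin.last T) = 0 := Pi.single_eq_of_ne (Fin.castSucc_lt_last t).ne' _
  have hxv : ∀ u ω, ‖x u ω‖ ≤ ‖v‖ := fun u ω => by
    by_cases hu : u = t.castSucc
    · subst hu
      by_cases hω : ω ∈ A <;> simp [x, hω]
    · simp [x, hu]
  have hc : hedgedClaim s x ∈ CsetLin P ℱ s ∩ M1 P ℱ :=
    ⟨mem_CsetLin_iff.2 ⟨stronglyAdapted_hedgedClaim hs hx, x, hx, hxT,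
      ae_of_all _ fun _ _ => le_rfl⟩, stronglyAdapted_hedgedClaim hs hx,
      integrable_hedgedClaim hsint hx (norm_nonneg v) hxv⟩
  have hpair : pairing P (hedgedClaim s x) y = v ⬝ᵥ v :=
    calc pairing P (hedgedClaim s x) y = ∫ ω in A, v ⬝ᵥ
          (y t.succ ω • s t.succ ω - y t.castSucc ω • s t.castSucc ω) ∂P := by
          rw [pairing, ← integral_indicator hA']
          refine integral_congr_ae (ae_of_all _ fun ω => ?_)
          dsimp only
          rw [sum_hedgedClaim_mul hxT, Finset.sum_eq_single t (fun u _ hu => by simp [x, hu])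
            (by simp)]
          by_cases hω : ω ∈ A <;> simp [x, hω]
      _ = v ⬝ᵥ v := integral_const_dotProduct v (((hm _).sub (hm _)).integrableOn)
  have hv : v = 0 := dotProduct_self_eq_zero.1 <| le_antisymm (hpair ▸ hpolar _ hc)
    (Finset.sum_nonneg fun j _ => mul_self_nonneg (v j))
  rwa [hv_def, integral_sub (hm _).integrableOn (hm _).integrableOn, sub_eq_zero] at hv

lemma martingale_of_mem_polar [IsFiniteMeasure P] (hs : StronglyAdapted ℱ s)
    (hsint : ∀ t, Integrable (s t) P) (hy : y ∈ Minf P ℱ)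
    (hpolar : ∀ c ∈ CsetLin P ℱ s ∩ M1 P ℱ, pairing P c y ≤ 0) :
    Martingale (fun t ω => y t ω • s t ω) ℱ P :=
  martingale_fin_of_setIntegral_eq_succ (fun t => (hy.1 t).smul (hs t))
    (fun t => (hsint t).smul_of_top_right (hy.2 t))
    fun t _ hA => setIntegral_succ_eq_of_mem_polar hs hsint hy hpolar t hA

lemma pairing_nonpos_of_martingale [IsFiniteMeasure P] (hy : y ∈ Minf P ℱ)
    (hy_nonneg : ∀ t, ∀ᵐ ω ∂P, 0 ≤ y t ω) (hm : Martingale (fun t ω => y t ω • s t ω) ℱ P)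
    {c : Fin (T + 1) → Ω → ℝ} (hc : c ∈ CsetLin P ℱ s ∩ M1 P ℱ) : pairing P c y ≤ 0 := by
  obtain ⟨-, x, hx, hxT, hcx⟩ := mem_CsetLin_iff.1 hc.1
  refine hm.integral_nonpos_of_ae_le_sum_dotProduct_sub (fun t => hx t.castSucc)
    (integrable_finsetSum _ fun t _ => (hc.2.2 t).mul_of_top_left (hy.2 t)) ?_
  filter_upwards [hcx, ae_all_iff.2 hy_nonneg] with ω hcω hyω
  calc ∑ t, c t ω * y t ω ≤ ∑ t, hedgedClaim s x t ω * y t ω :=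
        Finset.sum_le_sum fun t _ => mul_le_mul_of_nonneg_right (hcω t) (hyω t)
    _ = _ := sum_hedgedClaim_mul hxT y ω

end Polar

theorem polar_CsetLin_eq_martingales_general
    (P : Measure Ω) [IsProbabilityMeasure P] (ℱ : Filtration (Fin (T + 1)) m0)
    (s : Fin (T + 1) → Ω → (J → ℝ)) (hs : StronglyAdapted ℱ s)
    (hsint : ∀ t, Integrable (s t) P) :
    {y ∈ Minf P ℱ | ∀ c ∈ CsetLin P ℱ s ∩ M1 P ℱ, pairing P c y ≤ 0} =
    {y | y ∈ Minf P ℱ ∧ (∀ t, ∀ᵐ ω ∂P, 0 ≤ y t ω) ∧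
      (∀ t, Integrable (fun ω => y t ω • s t ω) P) ∧
      Martingale (fun t ω => y t ω • s t ω) ℱ P} := by
  ext y
  constructor
  · rintro ⟨hy, hpolar⟩
    exact ⟨hy, ae_nonneg_of_mem_polar hy hpolar, fun t => (hsint t).smul_of_top_right (hy.2 t),
      martingale_of_mem_polar hs hsint hy hpolar⟩
  · rintro ⟨hy, hy_nonneg, -, hm⟩
    exact ⟨hy, fun c hc => pairing_nonpos_of_martingale hy hy_nonneg hm hc⟩

/-- in the linear unconstrained model `Sₜ(x,ω) = sₜ(ω)·x`, the polar cone
of `C¹` is the set of nonnegative `y ∈ M^∞` such that `(yₜ sₜ)` is a martingale. -/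
theorem polar_CsetLin_eq_martingales
    (P : Measure Ω) [IsProbabilityMeasure P] (ℱ : Filtration (Fin (T + 1)) m0)
    (hcomp : ∀ (t : Fin (T + 1)) (s' : Set Ω), P s' = 0 → MeasurableSet[ℱ t] s')
    (s : Fin (T + 1) → Ω → (J → ℝ)) (hs : StronglyAdapted ℱ s)
    (hsint : ∀ t, Integrable (s t) P) :
    {y ∈ Minf P ℱ | ∀ c ∈ CsetLin P ℱ s ∩ M1 P ℱ, pairing P c y ≤ 0} =
    {y | y ∈ Minf P ℱ ∧ (∀ t, ∀ᵐ ω ∂P, 0 ≤ y t ω) ∧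
      (∀ t, Integrable (fun ω => y t ω • s t ω) P) ∧
      Martingale (fun t ω => y t ω • s t ω) ℱ P} :=
  polar_CsetLin_eq_martingales_general P ℱ s hs hsint
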